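/- Let N ≥ 1, δσ > 0, N₀ = −⌊N/2⌋, and x₀ < ⋯ < x_{N-1} with δσ(x_{N-1} − x₀) < 1. Define the forward map T : ℂ^N → ℂ^N sending coefficients (a_p)_{p=N₀}^{N₀+N−1} to the nonuniform spectrum (Σ_{k=0}^{N-1} (Σ_p a_p e^{2πi p δσ x_k}) e^{−2πi n δσ x_k})_{n=N₀}^{N₀+N−1}. Then T is a linear isomorphism of ℂ^N. -/
import Mathlib


open Complex Real

theorem forward_map_isomorphism
    (N : ℕ) (hN : 1 ≤ N) (δσ : ℝ) (hδσ : 0 < δσ)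
    (x : Fin N → ℝ) (hx : StrictMono x)
    (hgap : δσ * (x ⟨N - 1, by omega⟩ - x ⟨0, by omega⟩) < 1)
    (N₀ : ℤ) (hN₀ : N₀ = -((N : ℤ) / 2))
    (T : (Fin N → ℂ) → (Fin N → ℂ))
    (hT : ∀ (a : Fin N → ℂ) (n : Fin N),
      T a n = ∑ k : Fin N,
        (∑ p : Fin N, a p * Complex.exp (2 * π * Complex.I * ((N₀ + (p : ℕ) : ℤ) : ℂ) * δσ * (x k)))
          * Complex.exp (-2 * π * Complex.I * ((N₀ + (n : ℕ) : ℤ) : ℂ) * δσ * (x k))) :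
    IsLinearMap ℂ T ∧ Function.Bijective T := by
  classical
  -- the sampled exponentials
  set z : Fin N → ℂ := fun k => Complex.exp (2 * π * Complex.I * (δσ * x k)) with hzdef
  set w : Fin N → ℂ := fun k => Complex.exp (-(2 * π * Complex.I * (δσ * x k))) with hwdef
  have h2πI : (2 * (π : ℂ) * Complex.I) ≠ 0 := by
    simp [Real.pi_ne_zero, Complex.I_ne_zero]
  -- z is injective
  have key : ∀ j k : Fin N, j < k → z j ≠ z k := by
    intro j k hjk heq
    rw [hzdef] at heq
    rw [Complex.exp_eq_exp_iff_exists_int] at heq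
    obtain ⟨n, hn⟩ := heq
    have h3 : ((δσ * x j : ℝ) : ℂ) = ((δσ * x k : ℝ) : ℂ) + (n : ℂ) := by
      apply mul_left_cancel₀ h2πI
      push_cast
      push_cast at hn
      rw [hn]; push_cast; ring
    have h4 : δσ * x j = δσ * x k + (n : ℝ) := by exact_mod_cast h3
    have hj0 : x ⟨0, by omega⟩ ≤ x j := hx.monotone (by simp [Fin.le_def])
    have hkN : x k ≤ x ⟨N - 1, by omega⟩ := by
      apply hx.monotone
      simp only [Fin.le_def]
      have := k.isLt; omega
    have hpos : 0 < δσ * (x k - x j) := mul_pos hδσ (sub_pos.2 (hx hjk))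
    have hlt1 : δσ * (x k - x j) < 1 := by
      have : δσ * (x k - x j) ≤ δσ * (x ⟨N - 1, by omega⟩ - x ⟨0, by omega⟩) := by
        apply mul_le_mul_of_nonneg_left _ hδσ.le
        linarith
      linarith
    have hn1 : (-1 : ℝ) < (n : ℝ) := by nlinarith
    have hn2 : (n : ℝ) < 0 := by nlinarith
    have hn1' : (-1 : ℤ) < n := by exact_mod_cast hn1
    have hn2' : n < 0 := by exact_mod_cast hn2
    omega
  have hzinj : Function.Injective z := by
    intro j k h
    rcases lt_trichotomy j k with hlt | heq | hgt
    · exact absurd h (key j k hlt)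
    · exact heq
    · exact absurd h.symm (key k j hgt)
  have hwz : ∀ k, w k = (z k)⁻¹ := by
    intro k
    rw [hwdef, hzdef]
    exact Complex.exp_neg _
  have hwinj : Function.Injective w := by
    intro j k h
    apply hzinj
    rw [hwz, hwz] at h
    exact inv_inj.mp h
  -- the matrices
  set W : Matrix (Fin N) (Fin N) ℂ :=
    Matrix.of fun k p => Complex.exp (2 * π * Complex.I * ((N₀ + (p : ℕ) : ℤ) : ℂ) * δσ * x k)
    with hWdef
  set M : Matrix (Fin N) (Fin N) ℂ :=
    Matrix.of fun n k => Complex.exp (-2 * π * Complex.I * ((N₀ + (n : ℕ) : ℤ) : ℂ) * δσ * x k)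
    with hMdef
  set d : Fin N → ℂ := fun k => Complex.exp (2 * π * Complex.I * (N₀ : ℂ) * δσ * x k) with hddef
  set c : Fin N → ℂ := fun k => Complex.exp (-2 * π * Complex.I * (N₀ : ℂ) * δσ * x k) with hcdef
  have hWfac : W = Matrix.of fun k p => d k * (Matrix.vandermonde z) k p := by
    ext k p
    simp only [hWdef, hddef, Matrix.of_apply, Matrix.vandermonde_apply, hzdef]
    rw [← Complex.exp_nat_mul, ← Complex.exp_add]
    congr 1
    push_cast
    ring
  have hMfac : M.transpose = Matrix.of fun k n => c k * (Matrix.vandermonde w) k n := by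
    ext k n
    simp only [hMdef, hcdef, Matrix.transpose_apply, Matrix.of_apply,
      Matrix.vandermonde_apply, hwdef]
    rw [← Complex.exp_nat_mul, ← Complex.exp_add]
    congr 1
    push_cast
    ring
  have hvandW : (Matrix.vandermonde z).det ≠ 0 := by
    rw [Matrix.det_vandermonde]
    apply Finset.prod_ne_zero_iff.2
    intro i _
    apply Finset.prod_ne_zero_iff.2
    intro j hj
    rw [Finset.mem_Ioi] at hj
    exact sub_ne_zero.2 fun h => (ne_of_gt hj) (hzinj h)
  have hvandM : (Matrix.vandermonde w).det ≠ 0 := by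
    rw [Matrix.det_vandermonde]
    apply Finset.prod_ne_zero_iff.2
    intro i _
    apply Finset.prod_ne_zero_iff.2
    intro j hj
    rw [Finset.mem_Ioi] at hj
    exact sub_ne_zero.2 fun h => (ne_of_gt hj) (hwinj h)
  have hdetW : W.det ≠ 0 := by
    rw [hWfac, Matrix.det_mul_column]
    exact mul_ne_zero (Finset.prod_ne_zero_iff.2 fun k _ => Complex.exp_ne_zero _) hvandW
  have hdetM : M.det ≠ 0 := by
    rw [← Matrix.det_transpose, hMfac, Matrix.det_mul_column]
    exact mul_ne_zero (Finset.prod_ne_zero_iff.2 fun k _ => Complex.exp_ne_zero _) hvandM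
  set A := M * W with hAdef
  have hdetA : A.det ≠ 0 := by
    rw [hAdef, Matrix.det_mul]
    exact mul_ne_zero hdetM hdetW
  have hAunit : IsUnit A.det := isUnit_iff_ne_zero.2 hdetA
  -- T is multiplication by A
  have hTA : T = A.mulVec := by
    funext a n
    rw [hT]
    show _ = dotProduct (A n) a
    simp only [dotProduct, hAdef, Matrix.mul_apply, Finset.sum_mul]
    rw [Finset.sum_comm]
    refine Finset.sum_congr rfl fun k _ => ?_
    refine Finset.sum_congr rfl fun p _ => ?_
    simp only [hWdef, hMdef, Matrix.of_apply]
    ring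
  constructor
  · refine ⟨fun a b => ?_, fun s a => ?_⟩
    · rw [hTA, Matrix.mulVec_add]
    · rw [hTA, Matrix.mulVec_smul]
  · constructor
    · intro a b hab
      rw [hTA] at hab
      have := congrArg (A⁻¹.mulVec) hab
      rwa [Matrix.mulVec_mulVec, Matrix.mulVec_mulVec, Matrix.nonsing_inv_mul A hAunit,
        Matrix.one_mulVec, Matrix.one_mulVec] at this
    · intro b
      refine ⟨A⁻¹.mulVec b, ?_⟩
      rw [hTA, Matrix.mulVec_mulVec, Matrix.mul_nonsing_inv A hAunit, Matrix.one_mulVec]
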